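/- Let r, s ∈ ℂ and let W = U_{−1,r} ⊕ U_{0,s}, equipped with the linear endomorphisms e, h, f acting diagonally (by the given action on each summand). Then there exist linear endomorphisms X, Y of W such that (e, h, f, X, Y) is an osp(1|2)-representation on W if and only if r − s ∈ ℤ. -/

import Mathlib

/-!
`[h, X] = X` says that `X` raises `h`-weights by one. The `h`-weights of
`U_{−1,r} ⊕ U_{0,s}` are `−(2r + 2i + 1)` and `−(2s + 2i)` for `i ∈ ℤ`; two of them differ by
one only if `r − s ∈ ℤ`. Otherwise `X` kills every weight vector, so `e = X² = 0`, which is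
absurd. Conversely, if `s = r − n`, the odd operators swap the two summands, shifting indices
by `n`, and the twelve relations are checked on basis vectors.
-/

/-!
`W = U_{−1,r} ⊕ U_{0,s}` is modeled on `(ℤ ⊕ ℤ) →₀ ℂ`, where `Sum.inl i` encodes the
basis vector `E_i` of `U_{−1,r}` and `Sum.inr i` encodes the basis vector `E_i` of
`U_{0,s}`; `e, h, f` act diagonally by the defining formulas
`e·E_i = E_{i−1}`, `h·E_i = −(2r+2i−μ)·E_i`, `f·E_i = −(r+i+1)(r+i−μ)·E_{i+1}`
with `μ = −1` on the first summand and `μ = 0` on the second.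
-/

/-- An `osp(1|2)`-representation on a complex vector space `W`: a 5-tuple of
endomorphisms `(E,H,F,X,Y)` satisfying the twelve defining relations of `osp(1|2)`. -/
def IsOspRep {W : Type*} [AddCommGroup W] [Module ℂ W]
    (E H F X Y : Module.End ℂ W) : Prop :=
  H * E - E * H = (2 : ℂ) • E ∧
  H * F - F * H = (-2 : ℂ) • F ∧
  E * F - F * E = H ∧
  H * X - X * H = X ∧
  E * X - X * E = 0 ∧
  F * X - X * F = -Y ∧
  H * Y - Y * H = -Y ∧
  E * Y - Y * E = -X ∧
  F * Y - Y * F = 0 ∧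
  X * X = E ∧
  X * Y + Y * X = H ∧
  Y * Y = -F

/-- The diagonal action of `e` on `U_{−1,r} ⊕ U_{0,s}`. -/
noncomputable def eSum : Module.End ℂ ((ℤ ⊕ ℤ) →₀ ℂ) :=
  Finsupp.lift ((ℤ ⊕ ℤ) →₀ ℂ) ℂ (ℤ ⊕ ℤ)
    (Sum.elim (fun i => Finsupp.single (Sum.inl (i - 1)) 1)
              (fun i => Finsupp.single (Sum.inr (i - 1)) 1))

/-- The diagonal action of `h` on `U_{−1,r} ⊕ U_{0,s}`. -/
noncomputable def hSum (r s : ℂ) : Module.End ℂ ((ℤ ⊕ ℤ) →₀ ℂ) :=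
  Finsupp.lift ((ℤ ⊕ ℤ) →₀ ℂ) ℂ (ℤ ⊕ ℤ)
    (Sum.elim (fun i => (-(2 * r + 2 * (i : ℂ) + 1)) • Finsupp.single (Sum.inl i) 1)
              (fun i => (-(2 * s + 2 * (i : ℂ))) • Finsupp.single (Sum.inr i) 1))

/-- The diagonal action of `f` on `U_{−1,r} ⊕ U_{0,s}`. -/
noncomputable def fSum (r s : ℂ) : Module.End ℂ ((ℤ ⊕ ℤ) →₀ ℂ) :=
  Finsupp.lift ((ℤ ⊕ ℤ) →₀ ℂ) ℂ (ℤ ⊕ ℤ)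
    (Sum.elim
      (fun i => (-((r + (i : ℂ) + 1) * (r + (i : ℂ) + 1))) • Finsupp.single (Sum.inl (i + 1)) 1)
      (fun i => (-((s + (i : ℂ) + 1) * (s + (i : ℂ)))) • Finsupp.single (Sum.inr (i + 1)) 1))

open Finsupp

theorem Finsupp.lift_single {ι R M : Type*} [CommSemiring R] [AddCommMonoid M] [Module R M]
    (f : ι → M) (a : ι) (c : R) : Finsupp.lift M R ι f (single a c) = c • f a := by
  simp [Finsupp.lift_apply]

section Diagonal

variable {ι R : Type*}

noncomputable def diagonalEnd [CommSemiring R] (d : ι → R) : Module.End R (ι →₀ R) :=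
  Finsupp.lift (ι →₀ R) R ι fun i => d i • single i 1

theorem diagonalEnd_single [CommSemiring R] (d : ι → R) (k : ι) (a : R) :
    diagonalEnd d (single k a) = d k • single k a := by
  simp [diagonalEnd, mul_comm]

theorem diagonalEnd_apply [CommSemiring R] (d : ι → R) (w : ι →₀ R) (j : ι) :
    diagonalEnd d w j = d j * w j := by
  induction w using Finsupp.induction_linear with
  | zero => simp
  | add v w hv hw => simp [hv, hw, mul_add]
  | single k a =>
    rw [diagonalEnd_single, Finsupp.smul_apply, smul_eq_mul]
    by_cases hk : k = j
    · rw [hk]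
    · simp [single_eq_of_ne' hk]

theorem eq_zero_of_diagonalEnd_mul_sub_mul_eq_smul [CommRing R] [NoZeroDivisors R]
    {d : ι → R} {c : R} (hd : ∀ j k, d j ≠ d k + c) {X : Module.End R (ι →₀ R)}
    (hX : diagonalEnd d * X - X * diagonalEnd d = c • X) : X = 0 := by
  refine Finsupp.lhom_ext fun k a => Finsupp.ext fun j => ?_
  have hj := congrArg (· j) (LinearMap.congr_fun hX (single k a))
  simp only [LinearMap.sub_apply, Module.End.mul_apply, diagonalEnd_single, map_smul,
    Finsupp.sub_apply, diagonalEnd_apply, LinearMap.smul_apply, Finsupp.smul_apply,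
    smul_eq_mul] at hj
  have hfac : (d j - (d k + c)) * X (single k a) j = 0 := by linear_combination hj
  simpa [sub_ne_zero.mpr (hd j k)] using hfac

end Diagonal

noncomputable def hWeight (r s : ℂ) : ℤ ⊕ ℤ → ℂ :=
  Sum.elim (fun i => -(2 * r + 2 * (i : ℂ) + 1)) (fun i => -(2 * s + 2 * (i : ℂ)))

theorem hSum_eq_diagonalEnd (r s : ℂ) : hSum r s = diagonalEnd (hWeight r s) := by
  unfold hSum diagonalEnd
  congr 1
  ext (i | i) : 1 <;> rfl

theorem exists_int_of_hWeight_eq_add_one {r s : ℂ} {j k : ℤ ⊕ ℤ}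
    (h : hWeight r s j = hWeight r s k + 1) : ∃ n : ℤ, r - s = n := by
  have parity (a b : ℤ) (hab : (2 * a : ℂ) = 2 * b - 1) : False := by
    have : ((2 * a : ℤ) : ℂ) = ((2 * b - 1 : ℤ) : ℂ) := by push_cast; exact hab
    have := Int.cast_injective this
    omega
  rcases j with a | a <;> rcases k with b | b <;>
    simp only [hWeight, Sum.elim_inl, Sum.elim_inr] at h
  · exact (parity a b (by linear_combination -h)).elim
  · exact ⟨b - a - 1, by push_cast; linear_combination (-1 / 2 : ℂ) * h⟩
  · exact ⟨a - b, by push_cast; linear_combination (1 / 2 : ℂ) * h⟩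
  · exact (parity a b (by linear_combination -h)).elim

theorem eSum_ne_zero : eSum ≠ 0 := fun h => by
  have := LinearMap.congr_fun h (single (Sum.inl 0) 1)
  simp [eSum] at this

noncomputable def oddX (n : ℤ) : Module.End ℂ ((ℤ ⊕ ℤ) →₀ ℂ) :=
  Finsupp.lift ((ℤ ⊕ ℤ) →₀ ℂ) ℂ (ℤ ⊕ ℤ)
    (Sum.elim (fun i => single (Sum.inr (i + n)) 1) (fun j => single (Sum.inl (j - n - 1)) 1))

noncomputable def oddY (r : ℂ) (n : ℤ) : Module.End ℂ ((ℤ ⊕ ℤ) →₀ ℂ) :=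
  Finsupp.lift ((ℤ ⊕ ℤ) →₀ ℂ) ℂ (ℤ ⊕ ℤ)
    (Sum.elim (fun i => (-(r + (i : ℂ) + 1)) • single (Sum.inr (i + n + 1)) 1)
              (fun j => (-(r - n + (j : ℂ))) • single (Sum.inl (j - n)) 1))

theorem isOspRep_oddX_oddY (r : ℂ) (n : ℤ) :
    IsOspRep eSum (hSum r (r - n)) (fSum r (r - n)) (oddX n) (oddY r n) := by
  refine ⟨?_, ?_, ?_, ?_, ?_, ?_, ?_, ?_, ?_, ?_, ?_, ?_⟩ <;>
  refine Finsupp.lhom_ext fun a c => ?_ <;>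
  rcases a with i | i <;>
  simp only [eSum, hSum, fSum, oddX, oddY, Module.End.mul_apply, LinearMap.sub_apply,
    LinearMap.add_apply, LinearMap.neg_apply, LinearMap.smul_apply, LinearMap.zero_apply,
    lift_single, Sum.elim_inl, Sum.elim_inr, map_smul, map_neg, smul_smul,
    smul_single, smul_eq_mul, mul_one, single_neg] <;>
  refine Finsupp.ext fun j => ?_ <;>
  rcases j with j | j <;>
  simp only [single_apply, coe_sub, coe_add, coe_neg, Pi.sub_apply, Pi.add_apply,
    Pi.neg_apply, Finsupp.smul_apply, smul_eq_mul, coe_zero, Pi.zero_apply, Sum.inl.injEq,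
    Sum.inr.injEq, reduceCtorEq, if_false, mul_ite, mul_zero, mul_neg] <;>
  first
    | ring1
    | (split_ifs <;> first | omega | (push_cast; ring1))

/-- `U_{−1,r} ⊕ U_{0,s}` extends to an `osp(1|2)`-representation (for some odd operators
`X, Y`) if and only if `r − s ∈ ℤ`. -/
theorem osp_structure_iff_integer_difference (r s : ℂ) :
    (∃ X Y : Module.End ℂ ((ℤ ⊕ ℤ) →₀ ℂ),
      IsOspRep eSum (hSum r s) (fSum r s) X Y) ↔ ∃ n : ℤ, r - s = n := by
  constructor
  · rintro ⟨X, Y, -, -, -, hHX, -, -, -, -, -, hXX, -, -⟩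
    by_contra hrs
    have hX : X = 0 := by
      refine eq_zero_of_diagonalEnd_mul_sub_mul_eq_smul (d := hWeight r s) (c := 1)
        (fun j k h => hrs (exists_int_of_hWeight_eq_add_one h)) ?_
      rw [← hSum_eq_diagonalEnd, one_smul, hHX]
    exact eSum_ne_zero (by rw [← hXX, hX, zero_mul])
  · rintro ⟨n, hn⟩
    obtain rfl : s = r - n := by linear_combination -hn
    exact ⟨oddX n, oddY r n, isOspRep_oddX_oddY r n⟩
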